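/- Under the hypotheses of the previous statement, if additionally σ = (1/2)m(m+1) with m = n − |μ| ≥ 0, then a_2 = (1/2)(μ² − |μ|/(2m+1))·a_0. -/

import Mathlib

/-!
Multiplied by `X ^ 2`, the identity becomes a quadratic form in the `X ^ k * S⁽ᵏ⁾`, and
`X ^ k * (X ^ σ * g)⁽ᵏ⁾` is `X ^ σ` times the polynomial whose `i`-th coefficient is the falling
factorial `(σ + i)ₖ` times `aᵢ`. After cancelling `X ^ (2σ)`, the coefficients of `X` and `X ^ 2`
give `8σ a₀ (μ a₀ - a₁) = 0` and `(8σ + 1) a₂ = ((4σ + 1) μ² + σ - n(n+1)/2) a₀`; since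
`8σ + 1 = (2m + 1)²` and `n = m + |μ|`, the latter solves to the claimed value of `a₂`.
-/

open Polynomial

section
variable {R : Type*} [CommRing R]

theorem coeff_X_pow_mul_iterate_derivative (p : R[X]) (k i : ℕ) :
    (X ^ k * derivative^[k] p).coeff i = (descPochhammer R k).eval (i : R) * p.coeff i := by
  rw [coeff_X_pow_mul', descPochhammer_eval_eq_descFactorial]
  split_ifs with hki
  · rw [coeff_iterate_derivative, Nat.sub_add_cancel hki, nsmul_eq_mul]
  · rw [Nat.descFactorial_eq_zero_iff_lt.mpr (not_le.mp hki), Nat.cast_zero, zero_mul]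

theorem exists_X_pow_mul_iterate_derivative_X_pow_mul_eq (σ k : ℕ) (g : R[X]) :
    ∃ A : R[X], X ^ k * derivative^[k] (X ^ σ * g) = X ^ σ * A ∧
      ∀ i, A.coeff i = (descPochhammer R k).eval ((σ + i : ℕ) : R) * g.coeff i := by
  obtain ⟨A, hA⟩ : X ^ σ ∣ X ^ k * derivative^[k] (X ^ σ * g) := by
    refine X_pow_dvd_iff.mpr fun d hd => ?_
    rw [coeff_X_pow_mul_iterate_derivative, coeff_X_pow_mul', if_neg (by omega), mul_zero]
  refine ⟨A, hA, fun i => ?_⟩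
  rw [← coeff_X_pow_mul A σ i, ← hA, coeff_X_pow_mul_iterate_derivative, coeff_X_pow_mul,
    add_comm]

/-- With `t k = X ^ k * S⁽ᵏ⁾`, `eulerForm μ t` is `X ^ 2` times the left-hand side of the
fourth-order bilinear identity. -/
noncomputable def eulerForm (μ : R) (t : ℕ → R[X]) : R[X] :=
  t 0 * t 4 - 4 * t 1 * t 3 + 3 * t 2 ^ 2 + 2 * (t 0 * t 3 - t 1 * t 2)
    - 4 * X * (X + C μ) * (t 0 * t 2 - t 1 ^ 2) - 2 * t 0 * t 2 + 4 * C μ * X * t 0 * t 1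

theorem eulerForm_mul_left (μ : R) (p : R[X]) (t : ℕ → R[X]) :
    eulerForm μ (fun k => p * t k) = p ^ 2 * eulerForm μ t := by
  simp only [eulerForm]
  ring

variable {μ s : R} {a : ℕ → R[X]} {c : ℕ → R}

theorem coeff_one_eulerForm
    (ha : ∀ k i, (a k).coeff i = (descPochhammer R k).eval (s + i) * c i) :
    (eulerForm μ a).coeff 1 = 8 * s * c 0 * (μ * c 0 - c 1) := by
  simp only [eulerForm, coeff_add, coeff_sub, coeff_mul, coeff_X, coeff_C, ha,
    Finset.Nat.sum_antidiagonal_eq_sum_range_succ_mk, Finset.sum_range_succ, Finset.sum_range_zero,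
    descPochhammer_succ_eval, descPochhammer_zero, eval_one, pow_two]
  norm_num
  ring

theorem coeff_two_eulerForm
    (ha : ∀ k i, (a k).coeff i = (descPochhammer R k).eval (s + i) * c i) :
    (eulerForm μ a).coeff 2 =
      4 * c 0 * (-(8 * s + 1) * c 2 + (4 * s + 1) * μ * c 1 + s * c 0) := by
  simp only [eulerForm, coeff_add, coeff_sub, coeff_mul, coeff_X, coeff_C, ha,
    Finset.Nat.sum_antidiagonal_eq_sum_range_succ_mk, Finset.sum_range_succ, Finset.sum_range_zero,
    descPochhammer_succ_eval, descPochhammer_zero, eval_one, pow_two]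
  norm_num
  ring

end

theorem second_coeff_eq_of_triangular {K : Type*} [Field K] [CharZero K]
    {σ m n a μ x₀ x₂ : K} (hσ : 2 * σ = m * (m + 1)) (hn : n = m + a) (ha : a ^ 2 = μ ^ 2)
    (hm : 2 * m + 1 ≠ 0)
    (h : 2 * (8 * σ + 1) * x₂ = (2 * (4 * σ + 1) * μ ^ 2 + 2 * σ - n * (n + 1)) * x₀) :
    x₂ = 1 / 2 * (μ ^ 2 - a / (2 * m + 1)) * x₀ := by
  have h8σ : 8 * σ + 1 = (2 * m + 1) ^ 2 := by linear_combination 4 * hσ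
  rw [h8σ, hn] at h
  field_simp
  apply mul_left_cancel₀ hm
  linear_combination h - x₀ * ha + (4 * μ ^ 2 + 1) * x₀ * hσ

theorem stmt16_general (μ : ℤ) (n : ℕ) (σ : ℕ) (hσ : 1 ≤ σ)
    (m : ℕ) (hm : (m : ℤ) = (n : ℤ) - |μ|) (hσm : σ = m * (m + 1) / 2)
    (g : Polynomial ℂ) (hg0 : g.coeff 0 ≠ 0) (S : Polynomial ℂ)
    (hS : S = X ^ σ * g)
    (hident : X ^ 2 * (S * derivative (derivative (derivative (derivative S)))
        - 4 * derivative S * derivative (derivative (derivative S))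
        + 3 * (derivative (derivative S)) ^ 2)
      + 2 * X * (S * derivative (derivative (derivative S))
        - derivative S * derivative (derivative S))
      - 4 * X * (X + Polynomial.C (μ : ℂ)) * (S * derivative (derivative S) - (derivative S) ^ 2)
      - 2 * S * derivative (derivative S) + 4 * Polynomial.C (μ : ℂ) * S * derivative S
      = Polynomial.C (2 * (n : ℂ) * ((n : ℂ) + 1)) * S ^ 2) :
    g.coeff 2 = (1 / 2) * ((μ : ℂ) ^ 2 - ((|μ| : ℤ) : ℂ) / (2 * (m : ℂ) + 1)) * g.coeff 0 := by
  subst hS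
  choose A hAX hAc using fun k => exists_X_pow_mul_iterate_derivative_X_pow_mul_eq σ k g
  have hE : eulerForm (μ : ℂ) (fun k => X ^ k * derivative^[k] (X ^ σ * g))
      = C (2 * (n : ℂ) * ((n : ℂ) + 1)) * X ^ 2 * (X ^ σ * g) ^ 2 := by
    simp only [eulerForm, Function.iterate_succ_apply', Function.iterate_zero_apply]
    linear_combination X ^ 2 * hident
  have hA0 : g = A 0 := by simpa using hAX 0
  rw [funext hAX, eulerForm_mul_left, hA0] at hE
  have hEA : eulerForm (μ : ℂ) A = C (2 * (n : ℂ) * ((n : ℂ) + 1)) * X ^ 2 * A 0 ^ 2 :=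
    mul_left_cancel₀ (pow_ne_zero 2 (pow_ne_zero σ X_ne_zero)) (by rw [hE]; ring)
  have hc : ∀ k i, (A k).coeff i = (descPochhammer ℂ k).eval ((σ : ℂ) + i) * g.coeff i :=
    fun k i => by rw [hAc, Nat.cast_add]
  have hX1 := coeff_one_eulerForm (μ := (μ : ℂ)) hc
  have hX2 := coeff_two_eulerForm (μ := (μ : ℂ)) hc
  rw [hEA] at hX1 hX2
  rw [mul_assoc, coeff_C_mul, coeff_X_pow_mul'] at hX1 hX2
  norm_num [pow_two, mul_coeff_zero, ← hA0, hg0] at hX1 hX2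
  have hg1 : g.coeff 1 = μ * g.coeff 0 := by linear_combination -hX1.resolve_left (by omega)
  refine second_coeff_eq_of_triangular (σ := (σ : ℂ)) (n := (n : ℂ)) ?_ ?_ ?_ ?_ ?_
  · rw [hσm]
    exact_mod_cast Nat.mul_div_cancel' (Nat.even_mul_succ_self m).two_dvd
  · exact_mod_cast (by omega : (n : ℤ) = m + |μ|)
  · exact_mod_cast sq_abs μ
  · exact_mod_cast (by omega : 2 * m + 1 ≠ 0)
  · apply mul_left_cancel₀ hg0
    linear_combination (1 / 2 : ℂ) * hX2 + 2 * (4 * σ + 1) * μ * g.coeff 0 * hg1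

theorem stmt16 (μ : ℤ) (hμ : μ ≠ 0) (n : ℕ) (σ : ℕ) (hσ : 1 ≤ σ)
    (m : ℕ) (hm : (m : ℤ) = (n : ℤ) - |μ|) (hσm : σ = m * (m + 1) / 2)
    (g : Polynomial ℂ) (hg0 : g.coeff 0 ≠ 0) (S : Polynomial ℂ)
    (hS : S = X ^ σ * g)
    (hident : X ^ 2 * (S * derivative (derivative (derivative (derivative S)))
        - 4 * derivative S * derivative (derivative (derivative S))
        + 3 * (derivative (derivative S)) ^ 2)
      + 2 * X * (S * derivative (derivative (derivative S))
        - derivative S * derivative (derivative S))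
      - 4 * X * (X + Polynomial.C (μ : ℂ)) * (S * derivative (derivative S) - (derivative S) ^ 2)
      - 2 * S * derivative (derivative S) + 4 * Polynomial.C (μ : ℂ) * S * derivative S
      = Polynomial.C (2 * (n : ℂ) * ((n : ℂ) + 1)) * S ^ 2) :
    g.coeff 2 = (1 / 2) * ((μ : ℂ) ^ 2 - ((|μ| : ℤ) : ℂ) / (2 * (m : ℂ) + 1)) * g.coeff 0 :=
  stmt16_general μ n σ hσ m hm hσm g hg0 S hS hident
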